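/- Let c ∈ ℂ with Re(c) > 0 and let τ ∈ S_c. Then |λ| < 1 (so λ² ≠ 1 and the coefficients w₁, w₂, w₃ are well defined), and moreover Re(w₂) > 0, Re(2w₂ + w₃) > 0 and Re(2w₂ − w₃) > 0. -/

import Mathlib

open Complex MeasureTheory

/-- The maximal sector `S_c` of the bounded holomorphic semigroup generated by `-H_c`. -/
noncomputable def sector (c : ℂ) : Set ℂ :=
  if 0 < c.im then
    {τ : ℂ | τ ≠ 0 ∧ -(Real.pi / 2) ≤ τ.arg ∧ τ.arg ≤ Real.pi / 2 - c.arg}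
  else if c.im = 0 then
    {τ : ℂ | τ ≠ 0 ∧ -(Real.pi / 2) < τ.arg ∧ τ.arg < Real.pi / 2}
  else
    {τ : ℂ | τ ≠ 0 ∧ -(Real.pi / 2) - c.arg ≤ τ.arg ∧ τ.arg ≤ Real.pi / 2}

/-- `λ = exp(-2 c^{1/2} τ)`. -/
noncomputable def lam (c τ : ℂ) : ℂ := Complex.exp (-2 * c ^ ((1 : ℂ) / 2) * τ)

/-- `w₁ = c^{1/4} λ^{1/2} (π (1 - λ²))^{-1/2}`. -/
noncomputable def w₁ (c τ : ℂ) : ℂ :=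
  c ^ ((1 : ℂ) / 4) * lam c τ ^ ((1 : ℂ) / 2) *
    ((Real.pi : ℂ) * (1 - lam c τ ^ 2)) ^ (-(1 : ℂ) / 2)

/-- `w₂ = c^{1/2} (1 + λ²) / (2 (1 - λ²))`. -/
noncomputable def w₂ (c τ : ℂ) : ℂ :=
  c ^ ((1 : ℂ) / 2) * (1 + lam c τ ^ 2) / (2 * (1 - lam c τ ^ 2))

/-- `w₃ = 2 c^{1/2} λ / (1 - λ²)`. -/
noncomputable def w₃ (c τ : ℂ) : ℂ :=
  2 * c ^ ((1 : ℂ) / 2) * lam c τ / (1 - lam c τ ^ 2)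

/-- The Mehler kernel `K_c(τ, x, y) = w₁ exp(w₃ x y - w₂ (x² + y²))`. -/
noncomputable def mehlerK (c τ : ℂ) (x y : ℝ) : ℂ :=
  w₁ c τ * Complex.exp (w₃ c τ * (x : ℂ) * (y : ℂ) - w₂ c τ * ((x : ℂ) ^ 2 + (y : ℂ) ^ 2))

/-!
Put `s = c^{1/2}` and `z = sτ`, so that `λ = e^{-2z}`,
`2w₂ + w₃ = s (1 + λ)/(1 - λ) = s coth z`, `2w₂ - w₃ = s tanh z`, and `4w₂` is their sum.
The sector condition gives `Re τ ≥ 0`, `Re (cτ) ≥ 0` and `Re z > 0`; since `s² = c` and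
`s̄ s = |s|²`, the first two say exactly `|Im s · Im z| ≤ Re s · Re z`. Writing `z = x + iy`,
positivity of `Re (s coth z)` and `Re (s tanh z)` amounts to `|Im s · sin 2y| < Re s · sinh 2x`,
which follows from `|sin 2y| ≤ 2|y|` and `2x < sinh 2x`.
-/

lemma abs_mul_sin_two_mul_lt_mul_sinh {α β x y : ℝ} (hα : 0 < α) (hx : 0 < x)
    (h : |β * y| ≤ α * x) : |β * Real.sin (2 * y)| < α * Real.sinh (2 * x) :=
  calc |β * Real.sin (2 * y)| ≤ |β| * |2 * y| := by
        rw [abs_mul]; exact mul_le_mul_of_nonneg_left Real.abs_sin_le_abs (abs_nonneg β)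
    _ = 2 * |β * y| := by rw [abs_mul, abs_mul, abs_two]; ring
    _ ≤ α * (2 * x) := by linarith
    _ < α * Real.sinh (2 * x) :=
        mul_lt_mul_of_pos_left (Real.self_lt_sinh_iff.2 (by linarith)) hα

lemma re_mul_eq_norm_mul_norm_mul_cos_arg_add (x y : ℂ) :
    (x * y).re = ‖x‖ * ‖y‖ * Real.cos (arg x + arg y) := by
  rw [Real.cos_add, mul_re, ← norm_mul_cos_arg x, ← norm_mul_cos_arg y, ← norm_mul_sin_arg x,
    ← norm_mul_sin_arg y]
  ring

lemma arg_cpow_ofReal {x : ℂ} (hx : x ≠ 0) {y : ℝ}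
    (hy : arg x * y ∈ Set.Ioc (-Real.pi) Real.pi) :
    arg (x ^ (y : ℂ)) = arg x * y := by
  rw [cpow_ofReal, ofReal_cos, ofReal_sin]
  exact arg_mul_cos_add_sin_mul_I (Real.rpow_pos_of_pos (norm_pos_iff.2 hx) y) hy

lemma arg_cpow_half {c : ℂ} (hc : c ≠ 0) : arg (c ^ ((1 : ℂ) / 2)) = arg c / 2 := by
  have h := arg_cpow_ofReal hc (y := 1 / 2)
    ⟨by linarith [neg_pi_lt_arg c, Real.pi_pos], by linarith [arg_le_pi c, Real.pi_pos]⟩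
  push_cast at h
  rw [h, mul_one_div]

lemma re_cpow_half_pos {c : ℂ} (hc : 0 < c.re) : 0 < (c ^ ((1 : ℂ) / 2)).re := by
  have hc0 : c ≠ 0 := fun h => by simp [h] at hc
  have hargc := abs_lt.1 (abs_arg_lt_pi_div_two_iff.2 (Or.inl hc))
  rw [← norm_mul_cos_arg, arg_cpow_half hc0]
  refine mul_pos (norm_pos_iff.2 (cpow_ne_zero_iff.2 (Or.inl hc0)))
    (Real.cos_pos_of_mem_Ioo ⟨?_, ?_⟩) <;> linarith [Real.pi_pos]

lemma cpow_half_sq (c : ℂ) : (c ^ ((1 : ℂ) / 2)) ^ 2 = c := by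
  rw [one_div]; exact cpow_ofNat_inv_pow c 2

lemma arg_bounds_of_mem_sector {c τ : ℂ} (hc : 0 < c.re) (hτ : τ ∈ sector c) :
    τ ≠ 0 ∧ |arg τ| ≤ Real.pi / 2 ∧ |arg c + arg τ| ≤ Real.pi / 2 ∧
      |arg c / 2 + arg τ| < Real.pi / 2 := by
  have hargc := abs_lt.1 (abs_arg_lt_pi_div_two_iff.2 (Or.inl hc))
  unfold sector at hτ
  split_ifs at hτ with hpos hzero
  on_goal 1 =>
    have : 0 < arg c := lt_of_le_of_ne (arg_nonneg_iff.2 hpos.le)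
      fun h => hpos.ne' (arg_eq_zero_iff.1 h.symm).2
  on_goal 2 => have : arg c = 0 := arg_eq_zero_iff.2 ⟨hc.le, hzero⟩
  on_goal 3 => have : arg c < 0 := arg_neg_iff.2 (lt_of_le_of_ne (not_lt.1 hpos) hzero)
  all_goals
    obtain ⟨hτ0, hlo, hhi⟩ := hτ
    exact ⟨hτ0, abs_le.2 ⟨by linarith, by linarith⟩, abs_le.2 ⟨by linarith, by linarith⟩,
      abs_lt.2 ⟨by linarith, by linarith⟩⟩

lemma re_bounds_of_mem_sector {c τ : ℂ} (hc : 0 < c.re) (hτ : τ ∈ sector c) :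
    0 ≤ τ.re ∧ 0 ≤ (c * τ).re ∧ 0 < (c ^ ((1 : ℂ) / 2) * τ).re := by
  obtain ⟨hτ0, hτ, hcτ, hsτ⟩ := arg_bounds_of_mem_sector hc hτ
  have hc0 : c ≠ 0 := fun h => by simp [h] at hc
  refine ⟨abs_arg_le_pi_div_two_iff.1 hτ, ?_, ?_⟩
  · rw [re_mul_eq_norm_mul_norm_mul_cos_arg_add]
    exact mul_nonneg (by positivity) (Real.cos_nonneg_of_mem_Icc (abs_le.1 hcτ))
  · rw [re_mul_eq_norm_mul_norm_mul_cos_arg_add, arg_cpow_half hc0]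
    exact mul_pos (mul_pos (norm_pos_iff.2 (cpow_ne_zero_iff.2 (Or.inl hc0)))
      (norm_pos_iff.2 hτ0)) (Real.cos_pos_of_mem_Ioo (abs_lt.1 hsτ))

lemma abs_im_mul_im_mul_le_re_mul_re_mul {s τ : ℂ} (hτ : 0 ≤ τ.re)
    (hsτ : 0 ≤ (s ^ 2 * τ).re) :
    |s.im * (s * τ).im| ≤ s.re * (s * τ).re := by
  have hconj : s.re * (s * τ).re + s.im * (s * τ).im = (s.re ^ 2 + s.im ^ 2) * τ.re := by
    simp only [mul_re, mul_im]; ring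
  have hsq : s.re * (s * τ).re - s.im * (s * τ).im = (s ^ 2 * τ).re := by
    simp only [mul_re, mul_im, pow_two]; ring
  have : 0 ≤ (s.re ^ 2 + s.im ^ 2) * τ.re := by positivity
  exact abs_le.2 ⟨by linarith, by linarith⟩

lemma norm_exp_neg_two_mul_lt_one {z : ℂ} (hz : 0 < z.re) : ‖exp (-2 * z)‖ < 1 := by
  rw [norm_exp, Real.exp_lt_one_iff]; simp; linarith

lemma abs_two_mul_im_mul_im_exp_lt {s z : ℂ} (hs : 0 < s.re) (hz : 0 < z.re)
    (h : |s.im * z.im| ≤ s.re * z.re) :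
    |2 * s.im * (exp (-2 * z)).im| < s.re * (1 - ‖exp (-2 * z)‖ ^ 2) := by
  set E := Real.exp (-(2 * z.re))
  have hE : 0 < E := Real.exp_pos _
  have hnorm : ‖exp (-2 * z)‖ = E := by simp [norm_exp, E]
  have him : (exp (-2 * z)).im = -(E * Real.sin (2 * z.im)) := by simp [exp_im, E]
  have hsinh : 1 - E ^ 2 = 2 * E * Real.sinh (2 * z.re) := by
    have : E * Real.exp (2 * z.re) = 1 := by rw [← Real.exp_add]; simp
    rw [Real.sinh_eq]; linear_combination -this
  rw [hnorm, him, hsinh]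
  calc |2 * s.im * -(E * Real.sin (2 * z.im))| = 2 * E * |s.im * Real.sin (2 * z.im)| := by
        rw [show 2 * s.im * -(E * Real.sin (2 * z.im)) = -(2 * E) * (s.im * Real.sin (2 * z.im))
          by ring, abs_mul, abs_neg, abs_of_pos (by positivity)]
    _ < 2 * E * (s.re * Real.sinh (2 * z.re)) :=
        mul_lt_mul_of_pos_left (abs_mul_sin_two_mul_lt_mul_sinh hs hz h) (by positivity)
    _ = s.re * (2 * E * Real.sinh (2 * z.re)) := by ring

lemma re_mul_one_add_div_one_sub_pos {s l : ℂ} (h : 2 * s.im * l.im < s.re * (1 - ‖l‖ ^ 2)) :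
    0 < (s * (1 + l) / (1 - l)).re := by
  have hl : 1 - l ≠ 0 := by
    intro hl
    obtain rfl : l = 1 := (sub_eq_zero.1 hl).symm
    simp at h
  rw [Complex.sq_norm, normSq_apply] at h
  rw [div_re, ← add_div]
  refine div_pos ?_ (normSq_pos.2 hl)
  have : (s * (1 + l)).re * (1 - l).re + (s * (1 + l)).im * (1 - l).im =
      s.re * (1 - (l.re * l.re + l.im * l.im)) - 2 * s.im * l.im := by
    simp only [mul_re, mul_im, add_re, add_im, sub_re, sub_im, one_re, one_im]; ring
  linarith

lemma two_mul_w₂_add_w₃ {c τ : ℂ} (h₁ : 1 - lam c τ ≠ 0) (h₂ : 1 + lam c τ ≠ 0) :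
    2 * w₂ c τ + w₃ c τ = c ^ ((1 : ℂ) / 2) * (1 + lam c τ) / (1 - lam c τ) := by
  have : 1 - lam c τ ^ 2 ≠ 0 := by
    rw [show 1 - lam c τ ^ 2 = (1 - lam c τ) * (1 + lam c τ) by ring]
    exact mul_ne_zero h₁ h₂
  rw [w₂, w₃]; field_simp; ring

lemma two_mul_w₂_sub_w₃ {c τ : ℂ} (h₁ : 1 - lam c τ ≠ 0) (h₂ : 1 + lam c τ ≠ 0) :
    2 * w₂ c τ - w₃ c τ = c ^ ((1 : ℂ) / 2) * (1 - lam c τ) / (1 + lam c τ) := by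
  have : 1 - lam c τ ^ 2 ≠ 0 := by
    rw [show 1 - lam c τ ^ 2 = (1 - lam c τ) * (1 + lam c τ) by ring]
    exact mul_ne_zero h₁ h₂
  rw [w₂, w₃]; field_simp; ring

/-- For `Re c > 0` and `τ ∈ S_c` one has `|λ| < 1` (so `λ² ≠ 1` and the coefficients
`w₁, w₂, w₃` are well defined), `Re w₂ > 0`, `Re(2w₂ + w₃) > 0` and `Re(2w₂ - w₃) > 0`. -/
theorem mehler_coefficients_pos (c : ℂ) (hc : 0 < c.re) (τ : ℂ) (hτ : τ ∈ sector c) :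
    ‖lam c τ‖ < 1 ∧ lam c τ ^ 2 ≠ 1 ∧
    0 < (w₂ c τ).re ∧ 0 < (2 * w₂ c τ + w₃ c τ).re ∧ 0 < (2 * w₂ c τ - w₃ c τ).re := by
  set s := c ^ ((1 : ℂ) / 2)
  obtain ⟨hτ_re, hcτ_re, hz⟩ := re_bounds_of_mem_sector hc hτ
  have hcone : |s.im * (s * τ).im| ≤ s.re * (s * τ).re :=
    abs_im_mul_im_mul_le_re_mul_re_mul hτ_re (by rwa [cpow_half_sq])
  have hlam : lam c τ = exp (-2 * (s * τ)) := by rw [lam, mul_assoc]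
  have hnorm : ‖lam c τ‖ < 1 := hlam ▸ norm_exp_neg_two_mul_lt_one hz
  have hbound := abs_lt.1 (hlam ▸ abs_two_mul_im_mul_im_exp_lt (re_cpow_half_pos hc) hz hcone)
  have h₁ : 1 - lam c τ ≠ 0 := fun h => by simp [← sub_eq_zero.1 h] at hnorm
  have h₂ : 1 + lam c τ ≠ 0 := fun h => by simp [eq_neg_of_add_eq_zero_right h] at hnorm
  have hplus : 0 < (2 * w₂ c τ + w₃ c τ).re := by
    rw [two_mul_w₂_add_w₃ h₁ h₂]; exact re_mul_one_add_div_one_sub_pos hbound.2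
  have hminus : 0 < (2 * w₂ c τ - w₃ c τ).re := by
    have := re_mul_one_add_div_one_sub_pos (s := s) (l := -lam c τ)
      (by rw [neg_im, norm_neg]; linarith [hbound.1])
    rwa [sub_neg_eq_add, ← sub_eq_add_neg, ← two_mul_w₂_sub_w₃ h₁ h₂] at this
  have hw₂ : w₂ c τ = ((2 * w₂ c τ + w₃ c τ) + (2 * w₂ c τ - w₃ c τ)) / 4 := by ring
  refine ⟨hnorm, fun h => ?_, ?_, hplus, hminus⟩
  · have : ‖lam c τ ^ 2‖ < 1 := by
      rw [norm_pow]; exact pow_lt_one₀ (norm_nonneg _) hnorm two_ne_zero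
    simp [h] at this
  · rw [hw₂, div_ofNat_re, add_re]; positivity
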